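/- Suppose the lower level set {x ∈ s : F(x) ≤ F(x⁰)} is bounded, and let {x^k} be generated by Algorithm 2. Then the sequence {x^k} has an accumulation point x* which is a stationary point (G(x*) = 0), and moreover lim_{k→∞} min_{0 ≤ l ≤ k} G(x^l) = 0. -/

import Mathlib

open scoped RealInnerProductSpace

/-- The Frank–Wolfe gap `G(x) = sup_{v ∈ s} (⟪∇f(x), x − v⟫ + g(x) − g(v))`. -/
noncomputable def FWgap {E : Type*} [NormedAddCommGroup E] [InnerProductSpace ℝ E] [CompleteSpace E]
    (f g : E → ℝ) (s : Set E) (x : E) : ℝ :=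
  ⨆ v : s, (⟪gradient f x, x - (v : E)⟫ + g x - g (v : E))


/-- Candidate Lipschitz estimate `L^{(i)} = 2^{i−1} · L_prev`. -/
noncomputable def Lcand (Lprev : ℝ) (i : ℕ) : ℝ := 2 ^ i * Lprev / 2

/-- Candidate stepsize `τ^{(i)} = min {1, G / (2 L^{(i)} ‖d‖²)}`. -/
noncomputable def tauCand (Gx Lprev nd2 : ℝ) (i : ℕ) : ℝ :=
  min 1 (Gx / (2 * Lcand Lprev i * nd2))

/-!
Each accepted step decreases `F = f + g` by at least `τ_k G(x_k) / 4`, so `τ_k G(x_k)` is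
summable. The iterates and the Frank–Wolfe vertices `v_k` stay in a compact set on which `∇f` is
uniformly continuous, so the backtracking test accepts every sufficiently large `L`. If
`G(x_k) ≥ ε` for all large `k`, the constants `L_k` would therefore stay bounded and `τ_k`
bounded below, contradicting `τ_k G(x_k) → 0`. Hence `G(x_k)` is frequently small; a subsequence
along which it tends to `0` has a convergent subsequence, whose limit is stationary because each
term `⟪∇f(y), y - w⟫ + g(y) - g(w)` of the gap is lower semicontinuous in `y`.
-/

open Filter Topology Set

section Gap

variable {E : Type*} [NormedAddCommGroup E] [InnerProductSpace ℝ E] [CompleteSpace E]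
  {f g : E → ℝ} {s : Set E} {x v w : E}

lemma FWgap_term_le_of_isMinOn (hmin : IsMinOn (fun w => ⟪gradient f x, w⟫ + g w) s v)
    (hw : w ∈ s) :
    ⟪gradient f x, x - w⟫ + g x - g w ≤ ⟪gradient f x, x - v⟫ + g x - g v := by
  have h := isMinOn_iff.1 hmin w hw
  simp only [inner_sub_right] at h ⊢
  linarith

lemma FWgap_eq_of_isMinOn (hv : v ∈ s)
    (hmin : IsMinOn (fun w => ⟪gradient f x, w⟫ + g w) s v) :
    FWgap f g s x = ⟪gradient f x, x - v⟫ + g x - g v := by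
  have : Nonempty s := ⟨⟨v, hv⟩⟩
  refine le_antisymm (ciSup_le fun w => FWgap_term_le_of_isMinOn hmin w.2) ?_
  exact le_ciSup (f := fun w : s => ⟪gradient f x, x - (w : E)⟫ + g x - g w)
    ⟨_, forall_mem_range.2 fun w => FWgap_term_le_of_isMinOn hmin w.2⟩ ⟨v, hv⟩

lemma le_FWgap_of_isMinOn (hv : v ∈ s)
    (hmin : IsMinOn (fun w => ⟪gradient f x, w⟫ + g w) s v) (hw : w ∈ s) :
    ⟪gradient f x, x - w⟫ + g x - g w ≤ FWgap f g s x :=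
  (FWgap_eq_of_isMinOn hv hmin).symm ▸ FWgap_term_le_of_isMinOn hmin hw

lemma FWgap_eq_zero_of_tendsto {y : ℕ → E} {ystar : E} {G : ℕ → ℝ} (hys : ∀ n, y n ∈ s)
    (hystar : ystar ∈ s) (hy : Tendsto y atTop (𝓝 ystar))
    (hgrad : ContinuousWithinAt (gradient f) s ystar) (hg : LowerSemicontinuousWithinAt g s ystar)
    (hG : Tendsto G atTop (𝓝 0))
    (hle : ∀ n, ∀ w ∈ s, ⟪gradient f (y n), y n - w⟫ + g (y n) - g w ≤ G n) :
    FWgap f g s ystar = 0 := by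
  have hy' : Tendsto y atTop (𝓝[s] ystar) :=
    tendsto_nhdsWithin_iff.2 ⟨hy, Eventually.of_forall hys⟩
  have hterm : ∀ w ∈ s, ⟪gradient f ystar, ystar - w⟫ + g ystar - g w ≤ 0 := by
    intro w hw
    have hlsc : LowerSemicontinuousWithinAt
        (fun z => (⟪gradient f z, z - w⟫ - g w) + g z) s ystar :=
      (((hgrad.inner (continuousWithinAt_id.sub continuousWithinAt_const)).sub
        continuousWithinAt_const).lowerSemicontinuousWithinAt).add hg
    refine le_of_forall_lt_imp_le_of_dense fun c hc => ge_of_tendsto hG ?_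
    filter_upwards [hy'.eventually (hlsc c (by linarith))] with n hn
    linarith [hle n w hw]
  have : Nonempty s := ⟨⟨ystar, hystar⟩⟩
  refine le_antisymm (ciSup_le fun w => hterm w w.2) ?_
  have h0 := le_ciSup (f := fun w : s => ⟪gradient f ystar, ystar - (w : E)⟫ + g ystar - g w)
    ⟨0, forall_mem_range.2 fun w => hterm w w.2⟩ ⟨ystar, hystar⟩
  simp only [sub_self, inner_zero_right, zero_add] at h0
  exact h0

end Gap

lemma ContDiffOn.continuousOn_gradient {E : Type*} [NormedAddCommGroup E]
    [InnerProductSpace ℝ E] [CompleteSpace E] {f : E → ℝ} {u : Set E} (hf : ContDiffOn ℝ 1 f u)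
    (hu : IsOpen u) : ContinuousOn (gradient f) u :=
  (InnerProductSpace.toDual ℝ E).symm.continuous.comp_continuousOn
    (hf.continuousOn_fderiv_of_isOpen hu le_rfl)

lemma exists_norm_le_of_isMinOn {E : Type*} [NormedAddCommGroup E] [InnerProductSpace ℝ E]
    {g : E → ℝ} {s : Set E} (hs : s.Nonempty)
    (hg : ∀ M : ℝ, ∃ R : ℝ, ∀ z ∈ s, R ≤ ‖z‖ → M ≤ g z / ‖z‖) (C : ℝ) :
    ∃ B, ∀ p v, ‖p‖ ≤ C → v ∈ s → IsMinOn (fun w => ⟪p, w⟫ + g w) s v → ‖v‖ ≤ B := by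
  obtain ⟨z, hz⟩ := hs
  obtain ⟨R, hR⟩ := hg (C + 1)
  refine ⟨max (max R 1) (C * ‖z‖ + g z), fun p v hp hv hmin => ?_⟩
  by_contra! hlt
  simp only [max_lt_iff] at hlt
  have hgv : (C + 1) * ‖v‖ ≤ g v :=
    (le_div_iff₀ (by linarith)).1 (hR v hv hlt.1.1.le)
  have hvz : ⟪p, v⟫ + g v ≤ ⟪p, z⟫ + g z := isMinOn_iff.1 hmin z hz
  have hpz : ⟪p, z⟫ ≤ C * ‖z‖ :=
    (real_inner_le_norm p z).trans (mul_le_mul_of_nonneg_right hp (norm_nonneg z))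
  have hpv : -(C * ‖v‖) ≤ ⟪p, v⟫ := by
    have := (abs_le.1 (abs_real_inner_le_norm p v)).1
    nlinarith [mul_le_mul_of_nonneg_right hp (norm_nonneg v)]
  linarith

section Descent

variable {E : Type*} [NormedAddCommGroup E] [InnerProductSpace ℝ E] [CompleteSpace E]
  {f g : E → ℝ} {s : Set E}

lemma le_add_inner_add_of_norm_gradient_sub_le {S : Set E} {x y : E} {C : ℝ} (hS : Convex ℝ S)
    (hf : ∀ z ∈ S, DifferentiableAt ℝ f z) (hC : ∀ z ∈ S, ‖gradient f z - gradient f x‖ ≤ C)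
    (hx : x ∈ S) (hy : y ∈ S) :
    f y ≤ f x + ⟪gradient f x, y - x⟫ + C * ‖y - x‖ := by
  have h := hS.norm_image_sub_le_of_norm_hasFDerivWithin_le'
    (f' := fun z => InnerProductSpace.toDual ℝ E (gradient f z))
    (fun z hz => (hf z hz).hasGradientAt.hasFDerivAt.hasFDerivWithinAt)
    (fun z hz => by rw [← map_sub, LinearIsometryEquiv.norm_map]; exact hC z hz) hx hy
  rw [InnerProductSpace.toDual_apply_apply, Real.norm_eq_abs] at h
  linarith [le_abs_self (f y - f x - ⟪gradient f x, y - x⟫)]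

/-- First-order model of `f` plus convexity of `g` along a Frank–Wolfe step. -/
lemma FW_step_objective_le (hs : Convex ℝ s) (hf : ∀ z ∈ s, DifferentiableAt ℝ f z)
    (hg : ConvexOn ℝ s g) {x v : E} (hx : x ∈ s) (hv : v ∈ s) {τ C : ℝ} (hτ : τ ∈ Icc 0 1)
    (hC : ∀ z ∈ segment ℝ x (x + τ • (v - x)), ‖gradient f z - gradient f x‖ ≤ C) :
    f (x + τ • (v - x)) + g (x + τ • (v - x))
      ≤ f x + g x - τ * (⟪gradient f x, x - v⟫ + g x - g v) + C * τ * ‖v - x‖ := by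
  have hy : x + τ • (v - x) ∈ s := hs.add_smul_sub_mem hx hv hτ
  have hfy := le_add_inner_add_of_norm_gradient_sub_le (convex_segment _ _)
    (fun z hz => hf z (hs.segment_subset hx hy hz)) hC (left_mem_segment ℝ _ _)
    (right_mem_segment ℝ _ _)
  have hgy : g ((1 - τ) • x + τ • v) ≤ (1 - τ) • g x + τ • g v :=
    hg.2 hx hv (by linarith [hτ.2]) hτ.1 (by ring)
  rw [show (1 - τ) • x + τ • v = x + τ • (v - x) by module, smul_eq_mul, smul_eq_mul] at hgy
  have hinner : ⟪gradient f x, v - x⟫ = -⟪gradient f x, x - v⟫ := by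
    rw [← inner_neg_right, neg_sub]
  rw [add_sub_cancel_left, inner_smul_right, hinner, norm_smul, Real.norm_eq_abs,
    abs_of_nonneg hτ.1] at hfy
  linarith

end Descent

section StepSize

variable {G L n : ℝ}

lemma Lcand_pos (hL : 0 < L) (i : ℕ) : 0 < Lcand L i := by
  unfold Lcand
  positivity

lemma Lcand_zero (L : ℝ) : Lcand L 0 = L / 2 := by
  simp [Lcand]

lemma Lcand_succ (L : ℝ) (i : ℕ) : Lcand L (i + 1) = 2 * Lcand L i := by
  unfold Lcand
  ring

lemma tauCand_le_one (G L n : ℝ) (i : ℕ) : tauCand G L n i ≤ 1 :=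
  min_le_left _ _

lemma tauCand_pos (hG : 0 < G) (hL : 0 < L) (hn : 0 < n) (i : ℕ) : 0 < tauCand G L n i :=
  lt_min one_pos (by have := Lcand_pos hL i; positivity)

lemma tauCand_mul_le (hL : 0 < L) (hn : 0 < n) (i : ℕ) :
    tauCand G L n i * (2 * Lcand L i * n) ≤ G :=
  (le_div_iff₀ (by have := Lcand_pos hL i; positivity)).1 (min_le_right _ _)

lemma min_div_le_tauCand {ε Λ D : ℝ} {i : ℕ} (hε : 0 ≤ ε) (hεG : ε ≤ G) (hL : 0 < L)
    (hn : 0 < n) (hΛ : Lcand L i ≤ Λ) (hD : n ≤ D) :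
    min 1 (ε / (2 * Λ * D)) ≤ tauCand G L n i := by
  have hLi := Lcand_pos hL i
  refine min_le_min le_rfl (div_le_div₀ (hε.trans hεG) hεG (by positivity) ?_)
  gcongr
  linarith

lemma le_max_of_Lcand_pred_le {L : ℕ → ℝ} {i : ℕ → ℕ} {Λ : ℝ} {N : ℕ} (hL : ∀ k, 0 < L k)
    (hsucc : ∀ k, L (k + 1) = Lcand (L k) (i k))
    (hrej : ∀ k ≥ N, 0 < i k → Lcand (L k) (i k - 1) ≤ Λ) :
    ∀ k ≥ N, L k ≤ max (L N) (2 * Λ) := by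
  intro k hk
  induction k, hk using Nat.le_induction with
  | base => exact le_max_left _ _
  | succ k hk ih =>
    rw [hsucc k]
    rcases Nat.eq_zero_or_pos (i k) with hi | hi
    · rw [hi, Lcand_zero]
      linarith [hL k]
    · have := hrej k hk hi
      rw [show i k = i k - 1 + 1 by omega, Lcand_succ]
      exact le_max_of_le_right (by linarith)

/-- With `r = ‖d‖`: a trial with large `L` takes a short step `τ ‖d‖`. -/
lemma mul_le_of_lt_div {τ r Gm δ : ℝ} (hτ : τ ∈ Icc 0 1) (hr : 0 ≤ r) (hG : 0 ≤ G)
    (hτL : τ * (2 * L * r ^ 2) ≤ G) (hGm : G ≤ Gm) (hδ : 0 < δ) (hL : Gm / (2 * δ ^ 2) < L) :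
    τ * r ≤ δ := by
  have hLpos : 0 < L := lt_of_le_of_lt (div_nonneg (hG.trans hGm) (by positivity)) hL
  rw [div_lt_iff₀ (by positivity)] at hL
  have hsq : (τ * r) ^ 2 * (2 * L) ≤ δ ^ 2 * (2 * L) := by
    nlinarith [hτ.1, hτ.2]
  exact (pow_le_pow_iff_left₀ (mul_nonneg hτ.1 hr) hδ.le two_ne_zero).1
    (le_of_mul_le_mul_right hsq (by positivity))

end StepSize

/-- The backtracking test of Algorithm 2 at `x` along `d`, for gap `G` and trial pair `(L, τ)`. -/
def SufficientDecrease {E : Type*} [NormedAddCommGroup E] [Module ℝ E] (F : E → ℝ) (x d : E)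
    (G L τ : ℝ) : Prop :=
  F (x + τ • d) ≤ F x - 1 / 2 * τ * G + 1 / 2 * L * τ ^ 2 * ‖d‖ ^ 2

section SufficientDecrease

variable {E : Type*} [NormedAddCommGroup E] [InnerProductSpace ℝ E] [CompleteSpace E]
  {f g : E → ℝ} {s : Set E}

lemma sufficientDecrease_of_norm_gradient_sub_le (hs : Convex ℝ s)
    (hf : ∀ z ∈ s, DifferentiableAt ℝ f z) (hg : ConvexOn ℝ s g) {x v : E} (hx : x ∈ s)
    (hv : v ∈ s) {τ η L : ℝ} (hτ : τ ∈ Icc 0 1) (hL : 0 ≤ L)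
    (hη : ∀ z ∈ segment ℝ x (x + τ • (v - x)), ‖gradient f z - gradient f x‖ ≤ η)
    (hηG : 2 * η * ‖v - x‖ ≤ ⟪gradient f x, x - v⟫ + g x - g v) :
    SufficientDecrease (f + g) x (v - x) (⟪gradient f x, x - v⟫ + g x - g v) L τ := by
  have hstep := FW_step_objective_le hs hf hg hx hv hτ hη
  have hL2 : 0 ≤ 1 / 2 * L * τ ^ 2 * ‖v - x‖ ^ 2 := by positivity
  unfold SufficientDecrease
  simp only [Pi.add_apply]
  nlinarith [mul_le_mul_of_nonneg_left hηG hτ.1]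

/-- By uniform continuity of `∇f` on `K`, a large `L` forces a short step, along which `f` stays
close to its linear model. -/
lemma exists_sufficientDecrease_of_lt (hs : Convex ℝ s)
    (hf : ∀ z ∈ s, DifferentiableAt ℝ f z) (hgrad : ContinuousOn (gradient f) s)
    (hg : ConvexOn ℝ s g) {K : Set E} (hK : IsCompact K) (hKcv : Convex ℝ K) (hKs : K ⊆ s)
    {ε : ℝ} (hε : 0 < ε) (Gm : ℝ) :
    ∃ Λ, ∀ x ∈ K, ∀ v ∈ K, ∀ L τ : ℝ,
      ε ≤ ⟪gradient f x, x - v⟫ + g x - g v → ⟪gradient f x, x - v⟫ + g x - g v ≤ Gm →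
      Λ < L → τ ∈ Icc 0 1 → τ * (2 * L * ‖v - x‖ ^ 2) ≤ ⟪gradient f x, x - v⟫ + g x - g v →
      SufficientDecrease (f + g) x (v - x) (⟪gradient f x, x - v⟫ + g x - g v) L τ := by
  set D := Metric.diam K
  have hD : 0 ≤ D := Metric.diam_nonneg
  obtain ⟨δ, hδ, hunif⟩ := Metric.uniformContinuousOn_iff_le.1
    (hK.uniformContinuousOn_of_continuous (hgrad.mono hKs)) (ε / (2 * (D + 1))) (by positivity)
  refine ⟨Gm / (2 * δ ^ 2), fun x hx v hv L τ hεG hGm hL hτ hτL => ?_⟩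
  have hvx : ‖v - x‖ ≤ D := by
    rw [← dist_eq_norm]
    exact Metric.dist_le_diam_of_mem hK.isBounded hv hx
  have hy : x + τ • (v - x) ∈ K := hKcv.add_smul_sub_mem hx hv hτ
  have hyx : dist (x + τ • (v - x)) x ≤ δ := by
    rw [dist_eq_norm, add_sub_cancel_left, norm_smul, Real.norm_eq_abs, abs_of_nonneg hτ.1]
    exact mul_le_of_lt_div hτ (norm_nonneg _) (hε.le.trans hεG) hτL hGm hδ hL
  refine sufficientDecrease_of_norm_gradient_sub_le (η := ε / (2 * (D + 1))) hs hf hg (hKs hx)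
    (hKs hv) hτ
    (lt_of_le_of_lt (div_nonneg (hε.le.trans (hεG.trans hGm)) (by positivity)) hL).le
    (fun z hz => ?_) ?_
  · rw [← dist_eq_norm]
    refine hunif z (hKcv.segment_subset hx hy hz) x hx ?_
    exact (convex_closedBall x δ).segment_subset (Metric.mem_closedBall_self hδ.le) hyx hz
  · calc 2 * (ε / (2 * (D + 1))) * ‖v - x‖ = ε * (‖v - x‖ / (D + 1)) := by field_simp
      _ ≤ ε * 1 := by gcongr; rw [div_le_one (by positivity)]; linarith
      _ ≤ _ := by linarith

end SufficientDecrease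

lemma summable_of_le_sub_mul {F a : ℕ → ℝ} {c m : ℝ} (hc : 0 < c) (ha : ∀ k, 0 ≤ a k)
    (hF : ∀ k, F (k + 1) ≤ F k - c * a k) (hm : ∀ k, m ≤ F k) : Summable a := by
  have htel : ∀ n, F n + c * ∑ i ∈ Finset.range n, a i ≤ F 0 := by
    intro n
    induction n with
    | zero => simp
    | succ n ih => rw [Finset.sum_range_succ]; linarith [hF n]
  refine summable_of_sum_range_le ha (c := (F 0 - m) / c) fun n => ?_
  rw [le_div_iff₀ hc]
  linarith [htel n, hm n]

lemma tendsto_inf'_range_zero {u : ℕ → ℝ} (hu : ∀ k, 0 ≤ u k) (hsmall : ∀ ε > 0, ∃ k, u k < ε) :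
    Tendsto (fun k => (Finset.range (k + 1)).inf' Finset.nonempty_range_add_one u) atTop (𝓝 0) := by
  refine tendsto_order.2 ⟨fun a ha => Eventually.of_forall fun k =>
    ha.trans_le (Finset.le_inf' _ _ fun l _ => hu l), fun ε hε => ?_⟩
  obtain ⟨k₀, hk₀⟩ := hsmall ε hε
  filter_upwards [eventually_ge_atTop k₀] with k hk
  exact (Finset.inf'_le _ (Finset.mem_range.2 (by omega))).trans_lt hk₀

lemma mapClusterPt_zero_of_frequently_lt {u : ℕ → ℝ} (hu : ∀ k, 0 ≤ u k)
    (hsmall : ∀ ε > 0, ∃ᶠ k in atTop, u k < ε) : MapClusterPt 0 atTop u := by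
  refine mapClusterPt_iff_frequently.2 fun t ht => ?_
  obtain ⟨ε, hε, hball⟩ := Metric.mem_nhds_iff.1 ht
  refine (hsmall ε hε).mono fun k hk => hball ?_
  rw [Metric.mem_ball, Real.dist_eq, sub_zero, abs_of_nonneg (hu k)]
  exact hk

/-- The hypotheses on the sequences generated by Algorithm 2; `Lm k` stands for `L_{k-1}`. -/
structure IsAlg2Run {E : Type*} [NormedAddCommGroup E] [InnerProductSpace ℝ E] [CompleteSpace E]
    (f g : E → ℝ) (s : Set E) (x v d : ℕ → E) (ik : ℕ → ℕ) (Lm τk : ℕ → ℝ) : Prop where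
  Lm_zero_pos : 0 < Lm 0
  x_zero_mem : x 0 ∈ s
  v_mem : ∀ k, v k ∈ s
  v_isMinOn : ∀ k, IsMinOn (fun w => ⟪gradient f (x k), w⟫ + g w) s (v k)
  d_eq : ∀ k, d k = v k - x k
  FWgap_pos : ∀ k, 0 < FWgap f g s (x k)
  accepted : ∀ k, SufficientDecrease (f + g) (x k) (d k) (FWgap f g s (x k)) (Lcand (Lm k) (ik k))
    (tauCand (FWgap f g s (x k)) (Lm k) (‖d k‖ ^ 2) (ik k))
  rejected : ∀ k, ∀ j < ik k, ¬ SufficientDecrease (f + g) (x k) (d k) (FWgap f g s (x k))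
    (Lcand (Lm k) j) (tauCand (FWgap f g s (x k)) (Lm k) (‖d k‖ ^ 2) j)
  τk_eq : ∀ k, τk k = tauCand (FWgap f g s (x k)) (Lm k) (‖d k‖ ^ 2) (ik k)
  Lm_succ : ∀ k, Lm (k + 1) = Lcand (Lm k) (ik k)
  x_succ : ∀ k, x (k + 1) = x k + τk k • d k

namespace IsAlg2Run

variable {E : Type*} [NormedAddCommGroup E] [InnerProductSpace ℝ E] [CompleteSpace E]
  {f g : E → ℝ} {s : Set E} {x v d : ℕ → E} {ik : ℕ → ℕ} {Lm τk : ℕ → ℝ}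

lemma Lm_pos (run : IsAlg2Run f g s x v d ik Lm τk) : ∀ k, 0 < Lm k
  | 0 => run.Lm_zero_pos
  | k + 1 => run.Lm_succ k ▸ Lcand_pos (run.Lm_pos k) _

lemma FWgap_eq (run : IsAlg2Run f g s x v d ik Lm τk) (k : ℕ) :
    FWgap f g s (x k) = ⟪gradient f (x k), x k - v k⟫ + g (x k) - g (v k) :=
  FWgap_eq_of_isMinOn (run.v_mem k) (run.v_isMinOn k)

lemma le_FWgap (run : IsAlg2Run f g s x v d ik Lm τk) (k : ℕ) {w : E} (hw : w ∈ s) :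
    ⟪gradient f (x k), x k - w⟫ + g (x k) - g w ≤ FWgap f g s (x k) :=
  le_FWgap_of_isMinOn (run.v_mem k) (run.v_isMinOn k) hw

lemma norm_d_sq_pos (run : IsAlg2Run f g s x v d ik Lm τk) (k : ℕ) : 0 < ‖d k‖ ^ 2 := by
  refine pow_pos (norm_pos_iff.2 fun hd => ?_) 2
  have hvx : v k = x k := by rw [← sub_eq_zero, ← run.d_eq k, hd]
  have := run.FWgap_pos k
  rw [run.FWgap_eq k, hvx] at this
  simp at this

lemma τk_pos (run : IsAlg2Run f g s x v d ik Lm τk) (k : ℕ) : 0 < τk k :=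
  run.τk_eq k ▸ tauCand_pos (run.FWgap_pos k) (run.Lm_pos k) (run.norm_d_sq_pos k) _

lemma τk_mem_Icc (run : IsAlg2Run f g s x v d ik Lm τk) (k : ℕ) : τk k ∈ Icc 0 1 :=
  ⟨(run.τk_pos k).le, run.τk_eq k ▸ tauCand_le_one _ _ _ _⟩

lemma τk_mul_le (run : IsAlg2Run f g s x v d ik Lm τk) (k : ℕ) :
    τk k * (2 * Lm (k + 1) * ‖d k‖ ^ 2) ≤ FWgap f g s (x k) := by
  rw [run.τk_eq k, run.Lm_succ k]
  exact tauCand_mul_le (run.Lm_pos k) (run.norm_d_sq_pos k) _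

lemma x_mem (run : IsAlg2Run f g s x v d ik Lm τk) (hs : Convex ℝ s) : ∀ k, x k ∈ s
  | 0 => run.x_zero_mem
  | k + 1 => by
    rw [run.x_succ k, run.d_eq k]
    exact hs.add_smul_sub_mem (run.x_mem hs k) (run.v_mem k) (run.τk_mem_Icc k)

/-- The accepted `τ_k ≤ G / (2 L_k ‖d‖²)` makes the quadratic term at most a quarter of `τ_k G`. -/
lemma objective_succ_le (run : IsAlg2Run f g s x v d ik Lm τk) (k : ℕ) :
    f (x (k + 1)) + g (x (k + 1))
      ≤ f (x k) + g (x k) - 1 / 4 * (τk k * FWgap f g s (x k)) := by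
  have hacc := run.accepted k
  unfold SufficientDecrease at hacc
  rw [← run.τk_eq k, ← run.Lm_succ k, ← run.x_succ k] at hacc
  simp only [Pi.add_apply] at hacc
  nlinarith [mul_le_mul_of_nonneg_left (run.τk_mul_le k) (run.τk_pos k).le]

lemma objective_le (run : IsAlg2Run f g s x v d ik Lm τk) :
    ∀ k, f (x k) + g (x k) ≤ f (x 0) + g (x 0)
  | 0 => le_rfl
  | k + 1 => by
    have := mul_pos (run.τk_pos k) (run.FWgap_pos k)
    linarith [run.objective_succ_le k, run.objective_le k]

lemma tendsto_τk_mul_FWgap (run : IsAlg2Run f g s x v d ik Lm τk) (hs : Convex ℝ s)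
    (hF : BddBelow ((fun z => f z + g z) '' s)) :
    Tendsto (fun k => τk k * FWgap f g s (x k)) atTop (𝓝 0) := by
  obtain ⟨m, hm⟩ := hF
  exact (summable_of_le_sub_mul (by norm_num) (fun k => (mul_pos (run.τk_pos k)
    (run.FWgap_pos k)).le) run.objective_succ_le
    (fun k => hm ⟨x k, run.x_mem hs k, rfl⟩)).tendsto_atTop_zero

/-- The iterates stay in the bounded lower level set, so `∇f(x_k)` is bounded and the
supercoercivity of `g` bounds the minimizers `v_k`. -/
lemma exists_isCompact_convex [FiniteDimensional ℝ E] (run : IsAlg2Run f g s x v d ik Lm τk)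
    (hs_ne : s.Nonempty) (hs_cl : IsClosed s) (hs_cv : Convex ℝ s)
    (hg_sc : ∀ M : ℝ, ∃ R : ℝ, ∀ z ∈ s, R ≤ ‖z‖ → M ≤ g z / ‖z‖)
    (hgrad : ContinuousOn (gradient f) s)
    (hlev : Bornology.IsBounded {z ∈ s | f z + g z ≤ f (x 0) + g (x 0)}) :
    ∃ K, IsCompact K ∧ Convex ℝ K ∧ K ⊆ s ∧ ∀ k, x k ∈ K ∧ v k ∈ K := by
  obtain ⟨R, hR⟩ := hlev.subset_closedBall 0
  have hxR : ∀ k, x k ∈ s ∩ Metric.closedBall 0 R :=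
    fun k => ⟨run.x_mem hs_cv k, hR ⟨run.x_mem hs_cv k, run.objective_le k⟩⟩
  obtain ⟨C, hC⟩ := ((isCompact_closedBall (0 : E) R).inter_left hs_cl).exists_bound_of_continuousOn
    (hgrad.mono inter_subset_left)
  obtain ⟨B, hB⟩ := exists_norm_le_of_isMinOn hs_ne hg_sc C
  refine ⟨s ∩ Metric.closedBall 0 (max R B), (isCompact_closedBall _ _).inter_left hs_cl,
    hs_cv.inter (convex_closedBall _ _), inter_subset_left, fun k => ⟨⟨run.x_mem hs_cv k, ?_⟩,
    ⟨run.v_mem k, ?_⟩⟩⟩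
  · exact Metric.closedBall_subset_closedBall (le_max_left _ _) (hxR k).2
  · rw [mem_closedBall_zero_iff]
    exact (hB _ _ (hC _ (hxR k)) (run.v_mem k) (run.v_isMinOn k)).trans (le_max_right _ _)

lemma exists_FWgap_le (run : IsAlg2Run f g s x v d ik Lm τk)
    (hf : ∀ z ∈ s, DifferentiableAt ℝ f z) (hgrad : ContinuousOn (gradient f) s)
    (hF : BddBelow ((fun z => f z + g z) '' s)) {K : Set E} (hK : IsCompact K) (hKs : K ⊆ s)
    (hxvK : ∀ k, x k ∈ K ∧ v k ∈ K) :
    ∃ Gm, ∀ k, FWgap f g s (x k) ≤ Gm := by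
  obtain ⟨m, hm⟩ := hF
  obtain ⟨Cf, hCf⟩ := hK.exists_bound_of_continuousOn
    (fun z hz => (hf z (hKs hz)).continuousAt.continuousWithinAt)
  obtain ⟨Cg, hCg⟩ := hK.exists_bound_of_continuousOn (hgrad.mono hKs)
  refine ⟨Cg * Metric.diam K + (f (x 0) + g (x 0) + Cf) - (m - Cf), fun k => ?_⟩
  obtain ⟨hxk, hvk⟩ := hxvK k
  have hinner : ⟪gradient f (x k), x k - v k⟫ ≤ Cg * Metric.diam K := by
    refine (real_inner_le_norm _ _).trans (mul_le_mul (hCg _ hxk) ?_ (norm_nonneg _)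
      ((norm_nonneg _).trans (hCg _ hxk)))
    rw [← dist_eq_norm]
    exact Metric.dist_le_diam_of_mem hK.isBounded hxk hvk
  have hfx := (abs_le.1 (hCf _ hxk)).1
  have hfv := (abs_le.1 (hCf _ hvk)).2
  have hFv := hm ⟨v k, run.v_mem k, rfl⟩
  linarith [run.FWgap_eq k, run.objective_le k]

lemma exists_Lcand_pred_le (run : IsAlg2Run f g s x v d ik Lm τk) (hs : Convex ℝ s)
    (hf : ∀ z ∈ s, DifferentiableAt ℝ f z) (hgrad : ContinuousOn (gradient f) s)
    (hg : ConvexOn ℝ s g) (hF : BddBelow ((fun z => f z + g z) '' s)) {K : Set E}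
    (hK : IsCompact K) (hKcv : Convex ℝ K) (hKs : K ⊆ s) (hxvK : ∀ k, x k ∈ K ∧ v k ∈ K)
    {ε : ℝ} (hε : 0 < ε) :
    ∃ Λ, ∀ k, ε ≤ FWgap f g s (x k) → 0 < ik k → Lcand (Lm k) (ik k - 1) ≤ Λ := by
  obtain ⟨Gm, hGm⟩ := run.exists_FWgap_le hf hgrad hF hK hKs hxvK
  obtain ⟨Λ, hΛ⟩ := exists_sufficientDecrease_of_lt hs hf hgrad hg hK hKcv hKs hε Gm
  refine ⟨Λ, fun k hεk hik => not_lt.1 fun hlt => run.rejected k (ik k - 1) (by omega) ?_⟩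
  have hd := run.d_eq k
  have hG := run.FWgap_eq k
  have hn := run.norm_d_sq_pos k
  rw [hd] at hn ⊢
  have hGmk := hGm k
  rw [hG] at hεk hGmk ⊢
  exact hΛ (x k) (hxvK k).1 (v k) (hxvK k).2 _ _ hεk hGmk hlt
    ⟨(tauCand_pos (hεk.trans_lt' hε) (run.Lm_pos k) hn _).le, tauCand_le_one _ _ _ _⟩
    (tauCand_mul_le (run.Lm_pos k) hn _)

lemma frequently_FWgap_lt (run : IsAlg2Run f g s x v d ik Lm τk) (hs : Convex ℝ s)
    (hf : ∀ z ∈ s, DifferentiableAt ℝ f z) (hgrad : ContinuousOn (gradient f) s)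
    (hg : ConvexOn ℝ s g) (hF : BddBelow ((fun z => f z + g z) '' s)) {K : Set E}
    (hK : IsCompact K) (hKcv : Convex ℝ K) (hKs : K ⊆ s) (hxvK : ∀ k, x k ∈ K ∧ v k ∈ K)
    {ε : ℝ} (hε : 0 < ε) :
    ∃ᶠ k in atTop, FWgap f g s (x k) < ε := by
  by_contra hnot
  obtain ⟨N, hN⟩ := eventually_atTop.1 (not_frequently.1 hnot)
  simp only [not_lt] at hN
  obtain ⟨Λ, hΛ⟩ := run.exists_Lcand_pred_le hs hf hgrad hg hF hK hKcv hKs hxvK hε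
  have hLm := le_max_of_Lcand_pred_le run.Lm_pos run.Lm_succ fun k hk => hΛ k (hN k hk)
  set M := max (Lm N) (2 * Λ)
  set D := Metric.diam K ^ 2 + 1
  have hM : 0 < M := (run.Lm_pos N).trans_le (le_max_left _ _)
  have hτ : ∀ k ≥ N, min 1 (ε / (2 * M * D)) ≤ τk k := by
    intro k hk
    have hdD : ‖d k‖ ^ 2 ≤ D := by
      rw [run.d_eq k, ← dist_eq_norm]
      nlinarith [Metric.dist_le_diam_of_mem hK.isBounded (hxvK k).2 (hxvK k).1, dist_nonneg
        (x := v k) (y := x k)]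
    rw [run.τk_eq k]
    exact min_div_le_tauCand hε.le (hN k hk) (run.Lm_pos k) (run.norm_d_sq_pos k)
      (run.Lm_succ k ▸ hLm (k + 1) (by omega)) hdD
  have hpos : 0 < min 1 (ε / (2 * M * D)) * ε := by positivity
  obtain ⟨k, hk, hsmall⟩ := ((eventually_ge_atTop N).and
    ((run.tendsto_τk_mul_FWgap hs hF).eventually (gt_mem_nhds hpos))).exists
  exact hsmall.not_ge (mul_le_mul (hτ k hk) (hN k hk) hε.le (run.τk_pos k).le)

end IsAlg2Run

/-- **Theorem: subsequential convergence of Algorithm 2.**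
If the lower level set `{x ∈ s : F(x) ≤ F(x⁰)}` is bounded, then the sequence `{x^k}`
generated by Algorithm 2 has an accumulation point `x*` which is stationary
(`G(x*) = 0`), and `lim_{k→∞} min_{0 ≤ l ≤ k} G(x^l) = 0`. -/
theorem alg2_subsequential_convergence
    {E : Type*} [NormedAddCommGroup E] [InnerProductSpace ℝ E] [FiniteDimensional ℝ E]
    (s : Set E) (hs_ne : s.Nonempty) (hs_cl : IsClosed s) (hs_cv : Convex ℝ s)
    (g : E → ℝ) (hg_cv : ConvexOn ℝ s g) (hg_lsc : LowerSemicontinuousOn g s)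
    (hg_sc : ∀ M : ℝ, ∃ R : ℝ, ∀ z ∈ s, R ≤ ‖z‖ → M ≤ g z / ‖z‖)
    (f : E → ℝ) (hf : ∃ u : Set E, IsOpen u ∧ s ⊆ u ∧ ContDiffOn ℝ 1 f u)
    (hF_bdd : BddBelow ((fun z => f z + g z) '' s))
    (x v d : ℕ → E) (ik : ℕ → ℕ) (Lm τk : ℕ → ℝ)
    -- `Lm k` stands for `L_{k−1}` (so `Lm 0 = L_{−1} > 0` and `Lm (k+1) = L_k`).
    (hLm0 : 0 < Lm 0)
    (hx0 : x 0 ∈ s)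
    (hv : ∀ k, v k ∈ s ∧ ∀ w ∈ s,
      ⟪gradient f (x k), v k⟫ + g (v k) ≤ ⟪gradient f (x k), w⟫ + g w)
    (hd : ∀ k, d k = v k - x k)
    (hGpos : ∀ k, 0 < FWgap f g s (x k))
    (hik : ∀ k,
      (f (x k + tauCand (FWgap f g s (x k)) (Lm k) (‖d k‖ ^ 2) (ik k) • d k)
          + g (x k + tauCand (FWgap f g s (x k)) (Lm k) (‖d k‖ ^ 2) (ik k) • d k)
        ≤ (f (x k) + g (x k))
          - (1 / 2) * tauCand (FWgap f g s (x k)) (Lm k) (‖d k‖ ^ 2) (ik k)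
              * FWgap f g s (x k)
          + (1 / 2) * Lcand (Lm k) (ik k)
              * (tauCand (FWgap f g s (x k)) (Lm k) (‖d k‖ ^ 2) (ik k)) ^ 2 * ‖d k‖ ^ 2)
      ∧ ∀ j < ik k,
        ¬ (f (x k + tauCand (FWgap f g s (x k)) (Lm k) (‖d k‖ ^ 2) j • d k)
            + g (x k + tauCand (FWgap f g s (x k)) (Lm k) (‖d k‖ ^ 2) j • d k)
          ≤ (f (x k) + g (x k))
            - (1 / 2) * tauCand (FWgap f g s (x k)) (Lm k) (‖d k‖ ^ 2) j
                * FWgap f g s (x k)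
            + (1 / 2) * Lcand (Lm k) j
                * (tauCand (FWgap f g s (x k)) (Lm k) (‖d k‖ ^ 2) j) ^ 2 * ‖d k‖ ^ 2))
    (hτ : ∀ k, τk k = tauCand (FWgap f g s (x k)) (Lm k) (‖d k‖ ^ 2) (ik k))
    (hLsucc : ∀ k, Lm (k + 1) = Lcand (Lm k) (ik k))
    (hxsucc : ∀ k, x (k + 1) = x k + τk k • d k)
    (hlev : Bornology.IsBounded {z ∈ s | f z + g z ≤ f (x 0) + g (x 0)}) :
    (∃ xstar : E, (∃ φ : ℕ → ℕ, StrictMono φ ∧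
        Filter.Tendsto (fun k => x (φ k)) Filter.atTop (nhds xstar)) ∧
      FWgap f g s xstar = 0) ∧
    Filter.Tendsto
      (fun k => (Finset.range (k + 1)).inf' Finset.nonempty_range_add_one
        (fun l => FWgap f g s (x l)))
      Filter.atTop (nhds 0) := by
  obtain ⟨u, hu, hsu, hfu⟩ := hf
  have hdiff : ∀ z ∈ s, DifferentiableAt ℝ f z := fun z hz =>
    (hfu.differentiableOn one_ne_zero).differentiableAt (hu.mem_nhds (hsu hz))
  have hgrad : ContinuousOn (gradient f) s := (hfu.continuousOn_gradient hu).mono hsu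
  have run : IsAlg2Run f g s x v d ik Lm τk := ⟨hLm0, hx0, fun k => (hv k).1,
    fun k => isMinOn_iff.2 (hv k).2, hd, hGpos, fun k => (hik k).1, fun k => (hik k).2, hτ,
    hLsucc, hxsucc⟩
  obtain ⟨K, hK, hKcv, hKs, hxvK⟩ :=
    run.exists_isCompact_convex hs_ne hs_cl hs_cv hg_sc hgrad hlev
  have hsmall : ∀ ε > 0, ∃ᶠ k in atTop, FWgap f g s (x k) < ε := fun ε hε =>
    run.frequently_FWgap_lt hs_cv hdiff hgrad hg_cv hF_bdd hK hKcv hKs hxvK hε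
  have hGnonneg : ∀ k, 0 ≤ FWgap f g s (x k) := fun k => (hGpos k).le
  obtain ⟨ψ, hψ, hGψ⟩ := (mapClusterPt_zero_of_frequently_lt hGnonneg hsmall).tendsto_subseq
  obtain ⟨xstar, hxstar, φ, hφ, hxφ⟩ := hK.tendsto_subseq fun n => (hxvK (ψ n)).1
  refine ⟨⟨xstar, ⟨ψ ∘ φ, hψ.comp hφ, hxφ⟩, ?_⟩,
    tendsto_inf'_range_zero hGnonneg fun ε hε => (hsmall ε hε).exists⟩
  exact FWgap_eq_zero_of_tendsto (fun n => run.x_mem hs_cv _) (hKs hxstar) hxφ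
    (hgrad _ (hKs hxstar)) (hg_lsc _ (hKs hxstar)) (hGψ.comp hφ.tendsto_atTop)
    fun n w hw => run.le_FWgap _ hw
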